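/- arXiv:2208.00286 — 2 statements merged into one kernel-verified Lean document; each statement's English description precedes it below -/
import Mathlib

section
/- Let K be an algebraically closed field and g ≥ 1, r ≥ 0, s ≥ 0 integers. If F ∈ R_{g,r} is a nonzero SL_g-invariant polynomial that is homogeneous of degree s, then g divides 2s. -/
/-!
Setting: `R_{g,m-1}` is the polynomial ring over `K` in the variables `T^(l)_{ij}`,
`0 ≤ l ≤ m-1`, `1 ≤ i ≤ j ≤ g`, the entries of `m` generic symmetric `g × g` matrices,
with `SL_g` acting by congruence `T^(l) ↦ Λ · T^(l) · Λᵗ`.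
-/

open Matrix

noncomputable section

/-- The index set of the entries `(i, j)`, `i ≤ j`, of a symmetric `g × g` matrix. -/
abbrev SymIdx (g : ℕ) : Type := {p : Fin g × Fin g // p.1 ≤ p.2}

/-- A scalar matrix viewed as a matrix of constant polynomials. -/
def mapC (K : Type*) [CommRing K] (σ : Type*) {g : ℕ} (Λ : Matrix (Fin g) (Fin g) K) :
    Matrix (Fin g) (Fin g) (MvPolynomial σ K) :=
  Λ.map fun a => MvPolynomial.C a

/-- The `l`-th generic symmetric matrix `T^(l)` (`0 ≤ l ≤ m-1`), a symmetric matrix whose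
entries are the variables `T^(l)_{ij}`, with the convention `T^(l)_{ji} = T^(l)_{ij}`. -/
def genSym (K : Type*) [CommRing K] (g m : ℕ) (l : Fin m) :
    Matrix (Fin g) (Fin g) (MvPolynomial (Fin m × SymIdx g) K) :=
  Matrix.of fun i j =>
    if h : i ≤ j then MvPolynomial.X (l, ⟨(i, j), h⟩)
    else MvPolynomial.X (l, ⟨(j, i), le_of_not_ge h⟩)

/-- The `K`-algebra endomorphism sending each variable `T^(l)_{ij}` to the `(i,j)` entry of
`Λ · T^(l) · Λᵗ`. -/
def symAct (K : Type*) [CommRing K] (g m : ℕ) (Λ : Matrix (Fin g) (Fin g) K) :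
    MvPolynomial (Fin m × SymIdx g) K →ₐ[K] MvPolynomial (Fin m × SymIdx g) K :=
  MvPolynomial.aeval fun v : Fin m × SymIdx g =>
    (mapC K (Fin m × SymIdx g) Λ * genSym K g m v.1 *
      (mapC K (Fin m × SymIdx g) Λ)ᵀ) v.2.1.1 v.2.1.2

/-- The `K`-subalgebra of `SL_g`-invariant polynomials. -/
def symInvariants (K : Type*) [Field K] (g m : ℕ) :
    Subalgebra K (MvPolynomial (Fin m × SymIdx g) K) :=
  ⨅ Λ : SpecialLinearGroup (Fin g) K,
    AlgHom.equalizer (symAct K g m (Λ : Matrix (Fin g) (Fin g) K)) (AlgHom.id K _)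

/-!
A diagonal matrix `diag(d)` scales each monomial `T^μ` by `∏ k, d k ^ w k`, where `w k` counts
the occurrences of the index `k` in the variables of `T^μ`, each variable `T^(l)_{ij}`
contributing `i` and `j`. The monomials of an invariant are therefore fixed by all `d` with
`∏ k, d k = 1`, which over an infinite field forces the `w k` to be all equal. Since
`∑ k, w k = 2 * deg T^μ = 2 * s`, this common value times `g` is `2 * s`.
-/

open MvPolynomial

section DiagonalScaling

variable {σ R : Type*} [CommSemiring R] (c : σ → R)

lemma aeval_C_mul_X_monomial (ν : σ →₀ ℕ) (a : R) :
    aeval (fun v => C (c v) * X v) (monomial ν a) = monomial ν (a * ν.prod fun v e => c v ^ e) := by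
  rw [aeval_monomial, monomial_eq]
  simp only [Finsupp.prod, mul_pow, ← C_pow, Finset.prod_mul_distrib, ← map_prod, algebraMap_eq,
    C_mul]
  ring

lemma coeff_aeval_C_mul_X (F : MvPolynomial σ R) (μ : σ →₀ ℕ) :
    coeff μ (aeval (fun v => C (c v) * X v) F) = (μ.prod fun v e => c v ^ e) * coeff μ F := by
  classical
  induction F using MvPolynomial.induction_on' with
  | monomial ν a =>
    rw [aeval_C_mul_X_monomial, coeff_monomial, coeff_monomial]
    split_ifs with h
    · rw [h, mul_comm]
    · rw [mul_zero]
  | add p q hp hq => rw [map_add, coeff_add, coeff_add, hp, hq, mul_add]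

end DiagonalScaling

lemma symAct_diagonal (K : Type*) [CommRing K] (g m : ℕ) (d : Fin g → K) :
    symAct K g m (diagonal d) = aeval fun v => C (d v.2.1.1 * d v.2.1.2) * X v := by
  unfold symAct
  congr 1
  funext ⟨l, ⟨⟨a, b⟩, hab⟩⟩
  have hC : mapC K (Fin m × SymIdx g) (diagonal d) = diagonal fun k => C (d k) :=
    diagonal_map (map_zero _)
  have hgen : genSym K g m l a b = X (l, ⟨(a, b), hab⟩) := by
    rw [genSym, of_apply, dif_pos hab]
  rw [hC, diagonal_transpose, mul_diagonal, diagonal_mul, hgen, C_mul]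
  ring

section TorusWeight

variable {ι : Type*} {g : ℕ}

def entryCount (k : Fin g) (v : ι × SymIdx g) : ℕ :=
  (if v.2.1.1 = k then 1 else 0) + (if v.2.1.2 = k then 1 else 0)

def torusWeight (μ : ι × SymIdx g →₀ ℕ) (k : Fin g) : ℕ :=
  μ.sum fun v e => entryCount k v * e

lemma prod_pow_entryCount {M : Type*} [CommMonoid M] (δ : Fin g → M) (v : ι × SymIdx g) :
    ∏ k, δ k ^ entryCount k v = δ v.2.1.1 * δ v.2.1.2 := by
  simp only [entryCount, pow_add, Finset.prod_mul_distrib, pow_ite, pow_one, pow_zero,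
    Finset.prod_ite_eq, Finset.mem_univ, if_true]

lemma prod_mul_pow_eq_prod_pow_torusWeight {M : Type*} [CommMonoid M] (δ : Fin g → M)
    (μ : ι × SymIdx g →₀ ℕ) :
    (μ.prod fun v e => (δ v.2.1.1 * δ v.2.1.2) ^ e) = ∏ k, δ k ^ torusWeight μ k := by
  simp only [Finsupp.prod, torusWeight, Finsupp.sum, ← prod_pow_entryCount δ, ← Finset.prod_pow,
    ← pow_mul, ← Finset.prod_pow_eq_pow_sum]
  exact Finset.prod_comm

lemma sum_torusWeight (μ : ι × SymIdx g →₀ ℕ) : ∑ k, torusWeight μ k = 2 * μ.degree := by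
  have hcount : ∀ v : ι × SymIdx g, ∑ k, entryCount k v = 2 := by
    simp [entryCount, Finset.sum_add_distrib]
  simp only [torusWeight, Finsupp.sum, Finsupp.degree_apply, Finset.mul_sum]
  rw [Finset.sum_comm]
  simp only [← Finset.sum_mul, hcount]

end TorusWeight

lemma prod_pow_torusWeight_eq_one {K : Type*} [Field K] {g m : ℕ}
    {F : MvPolynomial (Fin m × SymIdx g) K}
    (hinv : ∀ Λ : SpecialLinearGroup (Fin g) K, symAct K g m (Λ : Matrix (Fin g) (Fin g) K) F = F)
    {μ : Fin m × SymIdx g →₀ ℕ} (hμ : coeff μ F ≠ 0) {d : Fin g → K} (hd : ∏ k, d k = 1) :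
    ∏ k, d k ^ torusWeight μ k = 1 := by
  have hdet : (diagonal d).det = 1 := by rwa [det_diagonal]
  have hdiag : symAct K g m (diagonal d) F = F := hinv ⟨diagonal d, hdet⟩
  have hcoeff := congrArg (coeff μ) hdiag
  rw [symAct_diagonal, coeff_aeval_C_mul_X, prod_mul_pow_eq_prod_pow_torusWeight] at hcoeff
  exact mul_right_cancel₀ hμ (hcoeff.trans (one_mul _).symm)

lemma eq_of_forall_ne_zero_pow_eq_pow {K : Type*} [Field K] [Infinite K] {a b : ℕ}
    (h : ∀ t : K, t ≠ 0 → t ^ a = t ^ b) : a = b := by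
  have hX : (Polynomial.X ^ (a + 1) : Polynomial K) = Polynomial.X ^ (b + 1) := by
    refine Polynomial.funext fun t => ?_
    rcases eq_or_ne t 0 with rfl | ht
    · simp
    · simp [pow_succ, h t ht]
  simpa using congrArg Polynomial.natDegree hX

lemma eq_of_forall_prod_eq_one_prod_pow_eq_one {ι K : Type*} [Fintype ι] [DecidableEq ι] [Field K]
    [Infinite K] {w : ι → ℕ} (h : ∀ d : ι → K, ∏ k, d k = 1 → ∏ k, d k ^ w k = 1) (i j : ι) :
    w i = w j := by
  refine eq_of_forall_ne_zero_pow_eq_pow (K := K) fun t ht => ?_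
  have hprod := h (Pi.mulSingle i t * Pi.mulSingle j t⁻¹) (by simp [Finset.prod_mul_distrib, ht])
  simp only [Pi.mul_apply, mul_pow, Finset.prod_mul_distrib, Pi.mulSingle_apply, ite_pow, one_pow,
    Finset.prod_ite_eq', Finset.mem_univ, if_true, inv_pow] at hprod
  exact (mul_inv_eq_one₀ (pow_ne_zero _ ht)).mp hprod

lemma card_dvd_sum_of_forall_eq {ι : Type*} [Fintype ι] {w : ι → ℕ} (h : ∀ i j, w i = w j) :
    Fintype.card ι ∣ ∑ i, w i := by
  cases isEmpty_or_nonempty ι with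
  | inl _ => simp
  | inr hι =>
    obtain ⟨i₀⟩ := hι
    rw [Finset.sum_congr rfl fun i _ => h i i₀, Finset.sum_const, smul_eq_mul, Finset.card_univ]
    exact dvd_mul_right _ _

theorem stmt9_general (K : Type*) [Field K] [IsAlgClosed K] (g r s : ℕ)
    (F : MvPolynomial (Fin (r + 1) × SymIdx g) K) (hF : F ≠ 0)
    (hinv : ∀ Λ : SpecialLinearGroup (Fin g) K,
      symAct K g (r + 1) (Λ : Matrix (Fin g) (Fin g) K) F = F)
    (hhom : F.IsHomogeneous s) : g ∣ 2 * s := by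
  obtain ⟨μ, hμ⟩ := exists_coeff_ne_zero hF
  have hweights : ∀ i j, torusWeight μ i = torusWeight μ j :=
    eq_of_forall_prod_eq_one_prod_pow_eq_one fun _ hd => prod_pow_torusWeight_eq_one hinv hμ hd
  have hdegree : μ.degree = s := by rw [Finsupp.degree_eq_weight_one]; exact hhom hμ
  simpa [sum_torusWeight, hdegree] using card_dvd_sum_of_forall_eq hweights

/-- Let `K` be algebraically closed, `g ≥ 1`, `r, s ≥ 0`.  If `F` is a nonzero
`SL_g`-invariant polynomial which is homogeneous of degree `s`, then `g` divides `2s`. -/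
theorem stmt9 (K : Type*) [Field K] [IsAlgClosed K] (g r s : ℕ) (hg : 1 ≤ g)
    (F : MvPolynomial (Fin (r + 1) × SymIdx g) K) (hF : F ≠ 0)
    (hinv : ∀ Λ : SpecialLinearGroup (Fin g) K,
      symAct K g (r + 1) (Λ : Matrix (Fin g) (Fin g) K) F = F)
    (hhom : F.IsHomogeneous s) : g ∣ 2 * s :=
  stmt9_general K g r s F hF hinv hhom
end
end

section
/- Let B be a field of characteristic 0 and g ≥ 1, r ≥ 0 integers. Let G be a g×g matrix whose entries G_{ij} ∈ R^B_{g,r} are homogeneous polynomials of degree 1, and suppose that for every X ∈ Mat_g(B), applying entrywise to G the substitution endomorphism T^(l) ↦ X·T^(l)·Xᵗ yields the matrix X·G·Xᵗ. Then there exist b_0,…,b_r ∈ B such that G_{ij} = b_0·T^(0)_{ij} + ⋯ + b_r·T^(r)_{ij} for all i, j; that is, the matrices T^(0),…,T^(r) form a B-basis of the space of such equivariant matrices of linear forms. -/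
open Matrix

noncomputable section

/-! Test the equivariance against the rank-one matrices `X = u e_kᵀ`, for which
`X T Xᵗ = T_{kk} u uᵗ`. Comparing coefficients of `T^(l)_{kk}` in the `(i, j)` entry gives the
identity of quadratic forms `∑_{a ≤ b} c_{ab} u_a u_b = β_l u_i u_j` in `u`, where `c_{ab}` is
the coefficient of `T^(l)_{ab}` in `G_{ij}` and `β_l` that of `T^(l)_{kk}` in `G_{kk}`.
Evaluating at `u = e_a` and `u = e_a + e_b` shows that such a form determines its
coefficients, so `c_{ab} = β_l` if `{a, b} = {i, j}` and `c_{ab} = 0` otherwise. -/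

open MvPolynomial

theorem MvPolynomial.IsHomogeneous.eq_sum_coeff_smul_X {σ R : Type*} [CommSemiring R]
    [Fintype σ] {p : MvPolynomial σ R} (hp : p.IsHomogeneous 1) :
    p = ∑ v, coeff (Finsupp.single v 1) p • X v := by
  classical
  rw [← mem_homogeneousSubmodule, homogeneousSubmodule_one_eq_span_X,
    Submodule.mem_span_range_iff_exists_fun] at hp
  obtain ⟨c, rfl⟩ := hp
  congr! with v
  simp [coeff_sum, coeff_X, Finsupp.single_left_inj one_ne_zero]

namespace SymIdx

variable {g : ℕ}

def ofPair (i j : Fin g) : SymIdx g :=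
  if h : i ≤ j then ⟨(i, j), h⟩ else ⟨(j, i), le_of_not_ge h⟩

theorem ofPair_fst_mul_snd {R : Type*} [CommMagma R] (u : Fin g → R) (i j : Fin g) :
    u (ofPair i j).1.1 * u (ofPair i j).1.2 = u i * u j := by
  unfold ofPair
  split_ifs
  · rfl
  · exact mul_comm _ _

variable {R : Type*} [CommRing R]

theorem sum_mul_single_mul_single (e : SymIdx g → R) (a b : Fin g) :
    ∑ w : SymIdx g,
        e w * ((Pi.single a 1 : Fin g → R) w.1.1 * (Pi.single b 1 : Fin g → R) w.1.2) =
      if h : a ≤ b then e ⟨(a, b), h⟩ else 0 := by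
  split_ifs with h
  · rw [Fintype.sum_eq_single ⟨(a, b), h⟩]
    · simp
    · rintro ⟨⟨x, y⟩, hxy⟩ hne
      by_cases hx : x = a
      · subst hx
        have hy : y ≠ b := fun hy => hne (by subst hy; rfl)
        simp [hy]
      · simp [hx]
  · refine Finset.sum_eq_zero fun w _ => ?_
    by_cases hx : w.1.1 = a
    · have hy : w.1.2 ≠ b := fun hy => h (hx ▸ hy ▸ w.2)
      simp [hy]
    · simp [hx]

theorem eq_zero_of_forall_sum_mul_eq_zero {e : SymIdx g → R}
    (h : ∀ u : Fin g → R, ∑ w : SymIdx g, e w * (u w.1.1 * u w.1.2) = 0) : e = 0 := by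
  have hdiag : ∀ a, e ⟨(a, a), le_rfl⟩ = 0 := fun a => by
    simpa [sum_mul_single_mul_single] using h (Pi.single a 1)
  funext ⟨⟨a, b⟩, hab⟩
  obtain hab' | hlt := hab.eq_or_lt
  · obtain rfl : a = b := hab'
    exact hdiag a
  have := h (Pi.single a 1 + Pi.single b 1)
  simp only [Pi.add_apply, add_mul, mul_add, Finset.sum_add_distrib,
    sum_mul_single_mul_single] at this
  simpa [hab, not_le.mpr hlt, hdiag] using this

theorem eq_of_forall_sum_mul_eq {c d : SymIdx g → R}
    (h : ∀ u : Fin g → R, ∑ w : SymIdx g, c w * (u w.1.1 * u w.1.2) =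
      ∑ w : SymIdx g, d w * (u w.1.1 * u w.1.2)) : c = d :=
  sub_eq_zero.mp <| eq_zero_of_forall_sum_mul_eq_zero fun u => by
    simp only [Pi.sub_apply, sub_mul, Finset.sum_sub_distrib, h u, sub_self]

end SymIdx

theorem Matrix.vecMulVec_single_mul_mul_transpose_apply {n R : Type*} [Fintype n]
    [DecidableEq n] [CommSemiring R] (u : n → R) (k : n) (M : Matrix n n R) (i j : n) :
    (vecMulVec u (Pi.single k 1) * M * (vecMulVec u (Pi.single k 1))ᵀ) i j =
      u i * u j * M k k := by
  simp only [transpose_vecMulVec, mul_apply, vecMulVec_apply, Pi.single_apply, mul_ite,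
    mul_one, mul_zero, ite_mul, zero_mul, Finset.sum_ite_eq', Finset.mem_univ, if_true]
  ring

section

variable {K : Type*} [CommRing K] {g m : ℕ}

theorem genSym_apply (l : Fin m) (i j : Fin g) :
    genSym K g m l i j = X (l, SymIdx.ofPair i j) := by
  simp only [genSym, SymIdx.ofPair, of_apply]
  split_ifs <;> rfl

theorem mapC_vecMulVec_single (σ : Type*) (u : Fin g → K) (k : Fin g) :
    mapC K σ (vecMulVec u (Pi.single k 1)) = vecMulVec (fun i => C (u i)) (Pi.single k 1) := by
  ext i j
  by_cases h : j = k <;> simp [mapC, vecMulVec_apply, h]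

theorem symAct_vecMulVec_single_X (u : Fin g → K) (k : Fin g) (v : Fin m × SymIdx g) :
    symAct K g m (vecMulVec u (Pi.single k 1)) (X v) =
      C (u v.2.1.1 * u v.2.1.2) * X (v.1, SymIdx.ofPair k k) := by
  rw [symAct, aeval_X, mapC_vecMulVec_single, vecMulVec_single_mul_mul_transpose_apply,
    genSym_apply, C_mul]

theorem coeff_symAct_vecMulVec_single {p : MvPolynomial (Fin m × SymIdx g) K}
    (hp : p.IsHomogeneous 1) (u : Fin g → K) (k : Fin g) (l : Fin m) :
    coeff (Finsupp.single (l, SymIdx.ofPair k k) 1)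
        (symAct K g m (vecMulVec u (Pi.single k 1)) p) =
      ∑ w : SymIdx g, coeff (Finsupp.single (l, w) 1) p * (u w.1.1 * u w.1.2) := by
  classical
  conv_lhs => rw [hp.eq_sum_coeff_smul_X]
  simp [symAct_vecMulVec_single_X, coeff_sum, mul_assoc, coeff_C_mul, coeff_X,
    Finsupp.single_left_inj one_ne_zero, Fintype.sum_prod_type]

end

theorem stmt15_general (B : Type*) [Field B] (g r : ℕ) (hg : 1 ≤ g)
    (G : Matrix (Fin g) (Fin g) (MvPolynomial (Fin (r + 1) × SymIdx g) B))
    (hhom : ∀ i j, (G i j).IsHomogeneous 1)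
    (hequiv : ∀ X : Matrix (Fin g) (Fin g) B,
      G.map (fun p => symAct B g (r + 1) X p) =
        mapC B (Fin (r + 1) × SymIdx g) X * G * (mapC B (Fin (r + 1) × SymIdx g) X)ᵀ) :
    ∃ b : Fin (r + 1) → B, ∀ i j,
      G i j = ∑ l, MvPolynomial.C (b l) * genSym B g (r + 1) l i j := by
  classical
  let k : Fin g := ⟨0, hg⟩
  let b l := coeff (Finsupp.single (l, SymIdx.ofPair k k) 1) (G k k)
  refine ⟨b, fun i j => ?_⟩
  have hcoeff (l) : (fun w => coeff (Finsupp.single (l, w) 1) (G i j)) =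
      Pi.single (SymIdx.ofPair i j) (b l) := by
    refine SymIdx.eq_of_forall_sum_mul_eq fun u => ?_
    have h := congrArg (coeff (Finsupp.single (l, SymIdx.ofPair k k) 1))
      (congrFun₂ (hequiv (vecMulVec u (Pi.single k 1))) i j)
    rw [map_apply, coeff_symAct_vecMulVec_single (hhom i j), mapC_vecMulVec_single,
      vecMulVec_single_mul_mul_transpose_apply, ← C_mul, coeff_C_mul] at h
    rw [h, Fintype.sum_eq_single (SymIdx.ofPair i j) fun w hw => by simp [hw],
      Pi.single_eq_same, SymIdx.ofPair_fst_mul_snd, mul_comm]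
  rw [(hhom i j).eq_sum_coeff_smul_X, Fintype.sum_prod_type]
  refine Finset.sum_congr rfl fun l _ => ?_
  simp [congrFun (hcoeff l), genSym_apply, Pi.single_apply, smul_eq_C_mul]

/-- Let `B` be a field of characteristic `0`, `g ≥ 1`, `r ≥ 0`.  Let `G` be a
`g × g` matrix whose entries are homogeneous polynomials of degree `1` in `R^B_{g,r}`, and
suppose that for every `X ∈ Mat_g(B)`, applying the substitution `T^(l) ↦ X·T^(l)·Xᵗ`
entrywise to `G` yields `X · G · Xᵗ`.  Then there are `b_0, …, b_r ∈ B` with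
`G_{ij} = b_0·T^(0)_{ij} + ⋯ + b_r·T^(r)_{ij}` for all `i, j`. -/
theorem stmt15 (B : Type*) [Field B] [CharZero B] (g r : ℕ) (hg : 1 ≤ g)
    (G : Matrix (Fin g) (Fin g) (MvPolynomial (Fin (r + 1) × SymIdx g) B))
    (hhom : ∀ i j, (G i j).IsHomogeneous 1)
    (hequiv : ∀ X : Matrix (Fin g) (Fin g) B,
      G.map (fun p => symAct B g (r + 1) X p) =
        mapC B (Fin (r + 1) × SymIdx g) X * G * (mapC B (Fin (r + 1) × SymIdx g) X)ᵀ) :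
    ∃ b : Fin (r + 1) → B, ∀ i j,
      G i j = ∑ l, MvPolynomial.C (b l) * genSym B g (r + 1) l i j :=
  stmt15_general B g r hg G hhom hequiv
end
end
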